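/- Let G be a finite non-cyclic group in which all irredundant covers have the same size. Then for any two distinct maximal cyclic subgroups C₁ and C₂ of G, the subgroup generated by C₁ ∪ C₂ equals G. -/

import Mathlib

def IsCover {G : Type*} [Group G] (S : Set (Subgroup G)) : Prop :=
  (∀ H ∈ S, H ≠ (⊤ : Subgroup G)) ∧ ∀ g : G, ∃ H ∈ S, g ∈ H

def IsIrredundantCover {G : Type*} [Group G] (S : Set (Subgroup G)) : Prop :=
  IsCover S ∧ ∀ T : Set (Subgroup G), T ⊂ S → ¬ IsCover T

def IsMaxCyclic {G : Type*} [Group G] (C : Subgroup G) : Prop :=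
  IsCyclic C ∧ ∀ D : Subgroup G, IsCyclic D → C ≤ D → C = D

def OnlyOneSizedCovers (G : Type*) [Group G] : Prop :=
  ∀ S T : Set (Subgroup G), IsIrredundantCover S → IsIrredundantCover T →
    S.ncard = T.ncard

/-!
The maximal cyclic subgroups of a finite non-cyclic group form an irredundant cover `M`: a
generator of a maximal cyclic subgroup lies in no other one. If two of them, `C₁ ≠ C₂`, generated
a proper subgroup `K`, then replacing `C₁` and `C₂` by `K` in `M` would give a cover with fewer
members than `M`, and any irredundant subcover of it would be strictly smaller than `M`.
-/

theorem Set.ncard_insert_sdiff_pair_lt {α : Type*} {s : Set α} (hs : s.Finite) {a b : α}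
    (ha : a ∈ s) (hb : b ∈ s) (hab : a ≠ b) (c : α) :
    (insert c (s \ {a, b})).ncard < s.ncard := by
  have hins := Set.ncard_insert_le c (s \ {a, b})
  have hsdiff := Set.ncard_sdiff_add_ncard_of_subset (Set.pair_subset ha hb) hs
  rw [Set.ncard_pair hab] at hsdiff
  omega

section Covers

variable {G : Type*} [Group G]

theorem isMaxCyclic_iff_maximal {C : Subgroup G} :
    IsMaxCyclic C ↔ Maximal (fun D : Subgroup G ↦ IsCyclic D) C :=
  and_congr_right fun _ ↦ forall₂_congr fun _ _ ↦
    ⟨fun h hle ↦ (h hle).ge, fun h hle ↦ le_antisymm hle (h hle)⟩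

theorem exists_isMaxCyclic_mem [Finite G] (g : G) : ∃ C, IsMaxCyclic C ∧ g ∈ C := by
  obtain ⟨C, hle, hC⟩ := Finite.exists_le_maximal (p := fun D : Subgroup G ↦ IsCyclic D)
    (Subgroup.isCyclic_zpowers g)
  exact ⟨C, isMaxCyclic_iff_maximal.2 hC, hle (Subgroup.mem_zpowers g)⟩

theorem IsMaxCyclic.ne_top (hG : ¬ IsCyclic G) {C : Subgroup G} (hC : IsMaxCyclic C) :
    C ≠ ⊤ := by
  rintro rfl
  have := hC.1
  exact hG (isCyclic_of_surjective Subgroup.topEquiv.toMonoidHom Subgroup.topEquiv.surjective)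

theorem isIrredundantCover_iff_minimal {S : Set (Subgroup G)} :
    IsIrredundantCover S ↔ Minimal IsCover S :=
  and_congr_right fun _ ↦
    ⟨fun h _ hT hle ↦ not_not.1 fun hST ↦ h _ ⟨hle, hST⟩ hT,
      fun h _ hTS hT ↦ hTS.2 (h hT hTS.1)⟩

theorem IsCover.exists_subset_isIrredundantCover [Finite G] {S : Set (Subgroup G)}
    (hS : IsCover S) : ∃ T ⊆ S, IsIrredundantCover T := by
  obtain ⟨T, hTS, hT⟩ := Finite.exists_le_minimal hS
  exact ⟨T, hTS, isIrredundantCover_iff_minimal.2 hT⟩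

theorem IsCover.insert_sup_sdiff {S : Set (Subgroup G)} (hS : IsCover S) {A B : Subgroup G}
    (hAB : A ⊔ B ≠ ⊤) : IsCover (insert (A ⊔ B) (S \ {A, B})) := by
  refine ⟨?_, fun g ↦ ?_⟩
  · rintro H (rfl | ⟨hH, -⟩)
    exacts [hAB, hS.1 H hH]
  obtain ⟨H, hH, hg⟩ := hS.2 g
  by_cases hHAB : H ∈ ({A, B} : Set (Subgroup G))
  · refine ⟨A ⊔ B, Set.mem_insert _ _, ?_⟩
    rcases hHAB with rfl | rfl
    exacts [Subgroup.mem_sup_left hg, Subgroup.mem_sup_right hg]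
  · exact ⟨H, Set.mem_insert_of_mem _ ⟨hH, hHAB⟩, hg⟩

theorem isIrredundantCover_setOf_isMaxCyclic [Finite G] (hG : ¬ IsCyclic G) :
    IsIrredundantCover {C : Subgroup G | IsMaxCyclic C} := by
  refine ⟨⟨fun C hC ↦ hC.ne_top hG, fun g ↦ exists_isMaxCyclic_mem g⟩, ?_⟩
  rintro T hT ⟨-, hTcov⟩
  obtain ⟨C, hC, hCT⟩ := Set.exists_of_ssubset hT
  obtain ⟨g, rfl⟩ := (Subgroup.isCyclic_iff_exists_zpowers_eq_top C).1 hC.1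
  obtain ⟨H, hHT, hgH⟩ := hTcov g
  rw [hC.2 H (hT.1 hHT).1 (Subgroup.zpowers_le.2 hgH)] at hCT
  exact hCT hHT

end Covers

theorem stmt5 (G : Type*) [Group G] [Finite G] (hG : ¬ IsCyclic G)
    (h : OnlyOneSizedCovers G) (C₁ C₂ : Subgroup G)
    (h₁ : IsMaxCyclic C₁) (h₂ : IsMaxCyclic C₂) (hne : C₁ ≠ C₂) :
    C₁ ⊔ C₂ = ⊤ := by
  by_contra hK
  set M := {C : Subgroup G | IsMaxCyclic C}
  have hM : IsIrredundantCover M := isIrredundantCover_setOf_isMaxCyclic hG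
  obtain ⟨T, hTsub, hT⟩ := (hM.1.insert_sup_sdiff hK).exists_subset_isIrredundantCover
  have hTle := Set.ncard_le_ncard hTsub
  have hlt := Set.ncard_insert_sdiff_pair_lt M.toFinite h₁ h₂ hne (C₁ ⊔ C₂)
  have hTM := h T M hT hM
  omega
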